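/- arXiv:1611.01931 — 5 statements merged into one kernel-verified Lean document; each statement's English description precedes it below -/
import Mathlib

section
/- Let Q be a commutative ring, f ∈ Q, and let (F₀, F₁, s₀ : F₀ → F₁, s₁ : F₁ → F₀) and (F₀', F₁', s₀' : F₀' → F₁', s₁' : F₁' → F₀') be matrix factorizations of f and f' respectively (i.e. s₀s₁ = f·id, s₁s₀ = f·id, and similarly for the primed maps with f'). Define maps t₁ : (F₀⊗F₁') ⊕ (F₁⊗F₀') → (F₀⊗F₀') ⊕ (F₁⊗F₁') and t₀ in the opposite direction by the block matrices t₀ = [[id⊗s₀', s₁⊗id],[−s₀⊗id, id⊗s₁']] and t₁ = [[id⊗s₁', −s₁⊗id],[s₀⊗id, id⊗s₀']]. Then t₀t₁ = (f+f')·id and t₁t₀ = (f+f')·id, so the tensor product is a matrix factorization of f + f'. -/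
/-!
Write `t₀` and `t₁` as `2 × 2` block matrices whose entries are `s ⊗ id` or `id ⊗ s'`.
On the diagonal of `t₀ t₁` and `t₁ t₀` one gets `sᵢ sⱼ ⊗ id + id ⊗ s'ₖ s'ₗ = (f + f') • id`;
each off-diagonal entry is `±((s ⊗ id)(id ⊗ s') - (id ⊗ s')(s ⊗ id))`, which vanishes because
maps acting on different tensor factors commute.
-/

open TensorProduct

namespace LinearMap

section BlockMatrix

variable {R A B C D E G : Type*} [Semiring R]
  [AddCommMonoid A] [AddCommMonoid B] [AddCommMonoid C] [AddCommMonoid D]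
  [AddCommMonoid E] [AddCommMonoid G]
  [Module R A] [Module R B] [Module R C] [Module R D] [Module R E] [Module R G]

/-- The `2 × 2` block matrix with rows `(a, b)` and `(c, d)` is `(a.coprod b).prod (c.coprod d)`. -/
theorem prod_coprod_comp_prod_coprod
    (a : C →ₗ[R] E) (b : D →ₗ[R] E) (c : C →ₗ[R] G) (d : D →ₗ[R] G)
    (a' : A →ₗ[R] C) (b' : B →ₗ[R] C) (c' : A →ₗ[R] D) (d' : B →ₗ[R] D) :
    (a.coprod b).prod (c.coprod d) ∘ₗ (a'.coprod b').prod (c'.coprod d') =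
      ((a ∘ₗ a' + b ∘ₗ c').coprod (a ∘ₗ b' + b ∘ₗ d')).prod
        ((c ∘ₗ a' + d ∘ₗ c').coprod (c ∘ₗ b' + d ∘ₗ d')) := by
  ext <;> simp

end BlockMatrix

section TensorFactorization

variable {R M N P : Type*} [CommSemiring R] [AddCommMonoid M] [AddCommMonoid N]
  [AddCommMonoid P] [Module R M] [Module R N] [Module R P]

theorem prod_coprod_smul_id (r : R) :
    ((r • id).coprod 0).prod ((0 : M →ₗ[R] N).coprod (r • id)) = r • id := by
  ext <;> simp

variable {r : R} {s : M →ₗ[R] N} {s' : N →ₗ[R] M}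

theorem lTensor_comp_lTensor_eq_smul_id (h : s ∘ₗ s' = r • id) :
    s.lTensor P ∘ₗ s'.lTensor P = r • id := by
  rw [← lTensor_comp, h, lTensor_smul, lTensor_id]

theorem rTensor_comp_rTensor_eq_smul_id (h : s ∘ₗ s' = r • id) :
    s.rTensor P ∘ₗ s'.rTensor P = r • id := by
  rw [← rTensor_comp, h, rTensor_smul, rTensor_id]

end TensorFactorization

end LinearMap

open LinearMap

theorem tensor_product_matrix_factorization_general
    (Q : Type) [CommRing Q] (f f' : Q)
    (F₀ F₁ F₀' F₁' : Type)
    [AddCommGroup F₀] [AddCommGroup F₁] [AddCommGroup F₀'] [AddCommGroup F₁']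
    [Module Q F₀] [Module Q F₁] [Module Q F₀'] [Module Q F₁']
    (s₀ : F₀ →ₗ[Q] F₁) (s₁ : F₁ →ₗ[Q] F₀)
    (s₀' : F₀' →ₗ[Q] F₁') (s₁' : F₁' →ₗ[Q] F₀')
    (h₀ : s₀.comp s₁ = f • LinearMap.id) (h₁ : s₁.comp s₀ = f • LinearMap.id)
    (h₀' : s₀'.comp s₁' = f' • LinearMap.id) (h₁' : s₁'.comp s₀' = f' • LinearMap.id)
    -- the block matrix maps
    (t₀ : (F₀ ⊗[Q] F₀') × (F₁ ⊗[Q] F₁') →ₗ[Q] (F₀ ⊗[Q] F₁') × (F₁ ⊗[Q] F₀'))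
    (t₁ : (F₀ ⊗[Q] F₁') × (F₁ ⊗[Q] F₀') →ₗ[Q] (F₀ ⊗[Q] F₀') × (F₁ ⊗[Q] F₁'))
    (ht₀ : t₀ = LinearMap.prod
      ((TensorProduct.map (LinearMap.id : F₀ →ₗ[Q] F₀) s₀').comp (LinearMap.fst Q _ _)
        + (TensorProduct.map s₁ (LinearMap.id : F₁' →ₗ[Q] F₁')).comp (LinearMap.snd Q _ _))
      ((-(TensorProduct.map s₀ (LinearMap.id : F₀' →ₗ[Q] F₀'))).comp (LinearMap.fst Q _ _)
        + (TensorProduct.map (LinearMap.id : F₁ →ₗ[Q] F₁) s₁').comp (LinearMap.snd Q _ _)))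
    (ht₁ : t₁ = LinearMap.prod
      ((TensorProduct.map (LinearMap.id : F₀ →ₗ[Q] F₀) s₁').comp (LinearMap.fst Q _ _)
        + (-(TensorProduct.map s₁ (LinearMap.id : F₀' →ₗ[Q] F₀'))).comp (LinearMap.snd Q _ _))
      ((TensorProduct.map s₀ (LinearMap.id : F₁' →ₗ[Q] F₁')).comp (LinearMap.fst Q _ _)
        + (TensorProduct.map (LinearMap.id : F₁ →ₗ[Q] F₁) s₀').comp (LinearMap.snd Q _ _))) :
    t₀.comp t₁ = (f + f') • LinearMap.id ∧ t₁.comp t₀ = (f + f') • LinearMap.id := by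
  -- definitional: `coprod a b = a ∘ₗ fst + b ∘ₗ snd` and `lTensor M g = map id g`
  replace ht₀ : t₀ = ((s₀'.lTensor F₀).coprod (s₁.rTensor F₁')).prod
      ((-s₀.rTensor F₀').coprod (s₁'.lTensor F₁)) := ht₀
  replace ht₁ : t₁ = ((s₁'.lTensor F₀).coprod (-s₁.rTensor F₀')).prod
      ((s₀.rTensor F₁').coprod (s₀'.lTensor F₁)) := ht₁
  subst ht₀ ht₁
  constructor <;>
  · rw [prod_coprod_comp_prod_coprod, ← prod_coprod_smul_id]
    simp only [comp_neg, neg_comp, neg_neg, lTensor_comp_rTensor, rTensor_comp_lTensor,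
      lTensor_comp_lTensor_eq_smul_id h₀', lTensor_comp_lTensor_eq_smul_id h₁',
      rTensor_comp_rTensor_eq_smul_id h₀, rTensor_comp_rTensor_eq_smul_id h₁, add_smul]
    congr 2 <;> abel

/-- the tensor product of a matrix factorization of `f` and a matrix
factorization of `f'` is a matrix factorization of `f + f'`. -/
theorem tensor_product_matrix_factorization
    (Q : Type) [CommRing Q] (f f' : Q)
    (F₀ F₁ F₀' F₁' : Type)
    [AddCommGroup F₀] [AddCommGroup F₁] [AddCommGroup F₀'] [AddCommGroup F₁']
    [Module Q F₀] [Module Q F₁] [Module Q F₀'] [Module Q F₁']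
    [Module.Free Q F₀] [Module.Free Q F₁] [Module.Free Q F₀'] [Module.Free Q F₁']
    [Module.Finite Q F₀] [Module.Finite Q F₁] [Module.Finite Q F₀'] [Module.Finite Q F₁']
    (s₀ : F₀ →ₗ[Q] F₁) (s₁ : F₁ →ₗ[Q] F₀)
    (s₀' : F₀' →ₗ[Q] F₁') (s₁' : F₁' →ₗ[Q] F₀')
    (h₀ : s₀.comp s₁ = f • LinearMap.id) (h₁ : s₁.comp s₀ = f • LinearMap.id)
    (h₀' : s₀'.comp s₁' = f' • LinearMap.id) (h₁' : s₁'.comp s₀' = f' • LinearMap.id)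
    -- the block matrix maps
    (t₀ : (F₀ ⊗[Q] F₀') × (F₁ ⊗[Q] F₁') →ₗ[Q] (F₀ ⊗[Q] F₁') × (F₁ ⊗[Q] F₀'))
    (t₁ : (F₀ ⊗[Q] F₁') × (F₁ ⊗[Q] F₀') →ₗ[Q] (F₀ ⊗[Q] F₀') × (F₁ ⊗[Q] F₁'))
    (ht₀ : t₀ = LinearMap.prod
      ((TensorProduct.map (LinearMap.id : F₀ →ₗ[Q] F₀) s₀').comp (LinearMap.fst Q _ _)
        + (TensorProduct.map s₁ (LinearMap.id : F₁' →ₗ[Q] F₁')).comp (LinearMap.snd Q _ _))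
      ((-(TensorProduct.map s₀ (LinearMap.id : F₀' →ₗ[Q] F₀'))).comp (LinearMap.fst Q _ _)
        + (TensorProduct.map (LinearMap.id : F₁ →ₗ[Q] F₁) s₁').comp (LinearMap.snd Q _ _)))
    (ht₁ : t₁ = LinearMap.prod
      ((TensorProduct.map (LinearMap.id : F₀ →ₗ[Q] F₀) s₁').comp (LinearMap.fst Q _ _)
        + (-(TensorProduct.map s₁ (LinearMap.id : F₀' →ₗ[Q] F₀'))).comp (LinearMap.snd Q _ _))
      ((TensorProduct.map s₀ (LinearMap.id : F₁' →ₗ[Q] F₁')).comp (LinearMap.fst Q _ _)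
        + (TensorProduct.map (LinearMap.id : F₁ →ₗ[Q] F₁) s₀').comp (LinearMap.snd Q _ _))) :
    t₀.comp t₁ = (f + f') • LinearMap.id ∧ t₁.comp t₀ = (f + f') • LinearMap.id :=
  tensor_product_matrix_factorization_general Q f f' F₀ F₁ F₀' F₁' s₀ s₁ s₀' s₁' h₀ h₁ h₀' h₁' t₀ t₁
    ht₀ ht₁
end

section
/- Let k be a field, R = k[x₁,…,xₙ]/(f) with f a homogeneous non-zero-divisor of degree d in the weighted polynomial ring Q = k[x₁,…,xₙ], and let (F₀, F₁, s₀, s₁) be a graded matrix factorization of f (s₀ of degree d, s₁ of degree 0, s₀s₁ = f·id, s₁s₀ = f·id). Then coker(s₁) is an R-module (i.e. f annihilates coker(s₁)), and the induced 2-periodic sequence ⋯ → F₀(−d) ⊗_Q R → F₁ ⊗_Q R → F₀ ⊗_Q R → coker(s₁) → 0 is exact. -/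
/-!
Both composites of a matrix factorization are multiplication by `f`, so `f = s₁ s₀` kills
`coker s₁`, and after reducing modulo `f` both composites vanish. Since `(R ⧸ (f)) ⊗ M ≅ M ⧸ f M`,
exactness at `N ⧸ f N` amounts to: if `b n = f m`, then `f (a m) = a (b n) = f n`, hence `n = a m`
because `f` is a non-zero-divisor on the free module `N`.
-/

open MvPolynomial TensorProduct

namespace TensorProduct

variable {R M : Type*} [CommRing R] [AddCommGroup M] [Module R M]

lemma mk_one_quotient_surjective (I : Ideal R) : Function.Surjective (mk R (R ⧸ I) M 1) := by
  rw [← quotTensorEquivQuotSMul_symm_comp_mkQ, LinearMap.coe_comp]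
  exact (LinearEquiv.surjective _).comp (Submodule.mkQ_surjective _)

lemma one_tmul_quotient_span_singleton_eq_zero_iff (f : R) (m : M) :
    (1 : R ⧸ Ideal.span {f}) ⊗ₜ[R] m = 0 ↔ ∃ m', f • m' = m := by
  rw [← (quotTensorEquivQuotSMul M _).map_eq_zero_iff, quotTensorEquivQuotSMul_mk_one_tmul,
    Submodule.Quotient.mk_eq_zero, Submodule.ideal_span_singleton_smul,
    Submodule.mem_smul_pointwise_iff_exists]
  simp

lemma smul_eq_zero_of_quotient_span_singleton (f : R) (x : (R ⧸ Ideal.span {f}) ⊗[R] M) :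
    f • x = 0 := by
  rw [← algebraMap_smul (R ⧸ Ideal.span {f}) f x, Ideal.Quotient.algebraMap_eq,
    Ideal.Quotient.eq_zero_iff_mem.mpr (Ideal.mem_span_singleton_self f), zero_smul]

end TensorProduct

section MatrixFactorization

variable {R M N : Type*} [CommRing R] [AddCommGroup M] [AddCommGroup N] [Module R M] [Module R N]
  {f : R} {a : M →ₗ[R] N} {b : N →ₗ[R] M}

lemma smul_eq_zero_of_comp_eq_smul (hba : b ∘ₗ a = f • LinearMap.id)
    (x : M ⧸ LinearMap.range b) : f • x = 0 := by
  induction x using Submodule.Quotient.induction_on with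
  | H m =>
    rw [← Submodule.Quotient.mk_smul, Submodule.Quotient.mk_eq_zero]
    exact ⟨a m, by simpa using LinearMap.congr_fun hba m⟩

theorem exact_baseChange_quotient_of_comp_eq_smul (hN : IsSMulRegular N f)
    (hba : b ∘ₗ a = f • LinearMap.id) (hab : a ∘ₗ b = f • LinearMap.id) :
    Function.Exact (a.baseChange (R ⧸ Ideal.span {f})) (b.baseChange (R ⧸ Ideal.span {f})) := by
  rw [LinearMap.exact_iff]
  refine le_antisymm (fun y hy ↦ ?_) (LinearMap.range_le_ker_iff.mpr ?_)
  · obtain ⟨n, rfl⟩ := mk_one_quotient_surjective _ y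
    obtain ⟨m, hm⟩ := (one_tmul_quotient_span_singleton_eq_zero_iff f (b n)).mp (by simpa using hy)
    have hn : a m = n := hN (show f • a m = f • n by
      rw [← map_smul, hm, ← LinearMap.comp_apply, hab, LinearMap.smul_apply, LinearMap.id_apply])
    exact ⟨1 ⊗ₜ m, by simp [hn]⟩
  · rw [← LinearMap.baseChange_comp, hba, LinearMap.baseChange_smul, LinearMap.baseChange_id]
    exact LinearMap.ext (smul_eq_zero_of_quotient_span_singleton f)

end MatrixFactorization

theorem matrix_factorization_two_periodic_resolution_general
    (kk : Type) [Field kk] (n : ℕ)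
    (f : MvPolynomial (Fin n) kk)
    (hnzd : f ∈ nonZeroDivisors (MvPolynomial (Fin n) kk))
    (F₀ F₁ : Type) [AddCommGroup F₀] [AddCommGroup F₁]
    [Module (MvPolynomial (Fin n) kk) F₀] [Module (MvPolynomial (Fin n) kk) F₁]
    [Module.Free (MvPolynomial (Fin n) kk) F₀] [Module.Free (MvPolynomial (Fin n) kk) F₁]
    (s₀ : F₀ →ₗ[MvPolynomial (Fin n) kk] F₁) (s₁ : F₁ →ₗ[MvPolynomial (Fin n) kk] F₀)
    (h₀ : s₀.comp s₁ = f • LinearMap.id) (h₁ : s₁.comp s₀ = f • LinearMap.id) :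
    -- `f` annihilates `coker(s₁)`
    (∀ x : F₀ ⧸ LinearMap.range s₁, f • x = 0) ∧
    -- exactness of the 2-periodic complex over `R = Q/(f)`
    (Function.Exact
        (LinearMap.baseChange (MvPolynomial (Fin n) kk ⧸ Ideal.span {f}) s₀)
        (LinearMap.baseChange (MvPolynomial (Fin n) kk ⧸ Ideal.span {f}) s₁) ∧
      Function.Exact
        (LinearMap.baseChange (MvPolynomial (Fin n) kk ⧸ Ideal.span {f}) s₁)
        (LinearMap.baseChange (MvPolynomial (Fin n) kk ⧸ Ideal.span {f}) s₀) ∧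
      Function.Exact
        (LinearMap.baseChange (MvPolynomial (Fin n) kk ⧸ Ideal.span {f}) s₁)
        (LinearMap.range
          (LinearMap.baseChange (MvPolynomial (Fin n) kk ⧸ Ideal.span {f}) s₁)).mkQ ∧
      Function.Surjective
        (LinearMap.range
          (LinearMap.baseChange (MvPolynomial (Fin n) kk ⧸ Ideal.span {f}) s₁)).mkQ) :=
  ⟨smul_eq_zero_of_comp_eq_smul h₁,
    exact_baseChange_quotient_of_comp_eq_smul (Module.Flat.isSMulRegular_of_nonZeroDivisors hnzd)
      h₁ h₀,
    exact_baseChange_quotient_of_comp_eq_smul (Module.Flat.isSMulRegular_of_nonZeroDivisors hnzd)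
      h₀ h₁,
    LinearMap.exact_map_mkQ_range _, Submodule.mkQ_surjective _⟩

/-- for a graded matrix factorization `(F₀, F₁, s₀, s₁)` of a homogeneous
non-zero-divisor `f` of degree `d` in the weighted polynomial ring `Q = k[x₁,…,xₙ]`,
the cokernel of `s₁` is annihilated by `f` (hence is a module over `R = Q/(f)`), and the
induced 2-periodic sequence `⋯ → F₀ ⊗ R → F₁ ⊗ R → F₀ ⊗ R → coker(s₁) → 0` is exact. -/
theorem matrix_factorization_two_periodic_resolution
    (kk : Type) [Field kk] (n : ℕ) (w : Fin n → ℕ) (hw : ∀ i, 0 < w i) (d : ℕ)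
    (f : MvPolynomial (Fin n) kk)
    (hhom : IsWeightedHomogeneous w f d)
    (hnzd : f ∈ nonZeroDivisors (MvPolynomial (Fin n) kk))
    (F₀ F₁ : Type) [AddCommGroup F₀] [AddCommGroup F₁]
    [Module (MvPolynomial (Fin n) kk) F₀] [Module (MvPolynomial (Fin n) kk) F₁]
    [Module.Free (MvPolynomial (Fin n) kk) F₀] [Module.Free (MvPolynomial (Fin n) kk) F₁]
    [Module.Finite (MvPolynomial (Fin n) kk) F₀] [Module.Finite (MvPolynomial (Fin n) kk) F₁]
    (s₀ : F₀ →ₗ[MvPolynomial (Fin n) kk] F₁) (s₁ : F₁ →ₗ[MvPolynomial (Fin n) kk] F₀)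
    (h₀ : s₀.comp s₁ = f • LinearMap.id) (h₁ : s₁.comp s₀ = f • LinearMap.id) :
    -- `f` annihilates `coker(s₁)`
    (∀ x : F₀ ⧸ LinearMap.range s₁, f • x = 0) ∧
    -- exactness of the 2-periodic complex over `R = Q/(f)`
    (Function.Exact
        (LinearMap.baseChange (MvPolynomial (Fin n) kk ⧸ Ideal.span {f}) s₀)
        (LinearMap.baseChange (MvPolynomial (Fin n) kk ⧸ Ideal.span {f}) s₁) ∧
      Function.Exact
        (LinearMap.baseChange (MvPolynomial (Fin n) kk ⧸ Ideal.span {f}) s₁)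
        (LinearMap.baseChange (MvPolynomial (Fin n) kk ⧸ Ideal.span {f}) s₀) ∧
      Function.Exact
        (LinearMap.baseChange (MvPolynomial (Fin n) kk ⧸ Ideal.span {f}) s₁)
        (LinearMap.range
          (LinearMap.baseChange (MvPolynomial (Fin n) kk ⧸ Ideal.span {f}) s₁)).mkQ ∧
      Function.Surjective
        (LinearMap.range
          (LinearMap.baseChange (MvPolynomial (Fin n) kk ⧸ Ideal.span {f}) s₁)).mkQ) :=
  matrix_factorization_two_periodic_resolution_general kk n f hnzd F₀ F₁ s₀ s₁ h₀ h₁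
end

section
/- Let F = {(v,w) ∈ ℂ² : vw = 1} with the μ_d-action ζ·(v,w) = (ζᵃv, ζᵇw), a + b = d, ζ = exp(2πi/d). Then the unreduced suspension ΣF is μ_d-equivariantly homotopy equivalent to the one-point compactification S^V of the one-dimensional complex μ_d-representation V on which ζ acts as multiplication by ζᵃ. -/
/-!
Writing a point of `F` as `(v, v⁻¹)`, the space `F ≅ ℂˣ` deformation retracts onto the circle
`|v| = 1` by shrinking `|v|` to `1`, and this commutes with the rotations `(v, w) ↦ (cv, c⁻¹w)`
for `|c| = 1`. The map `ΣF → S^V` sends `[(v, w), s]` to `(s / (1 - s)) · v / |v|`, clamped so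
that `s ≤ 0` goes to `0` and `s ≥ 1` to `∞`; the map `S^V → ΣF` sends `z` to the circle point of
direction `z / |z|` at height `|z| / (1 + |z|)`. The composite `S^V → ΣF → S^V` is the identity,
the other composite is the suspension of the retraction at time `0`, and all maps commute with
the rotations, which multiply directions by `c` and preserve absolute values. Continuity of
`S^V → ΣF` at `0` and at `∞` comes from the compactness of the circle.
-/

open Complex OnePoint

/-- The Milnor fiber of `vw` on `ℂ²`. -/
abbrev MilnorFiberVW : Type := {p : ℂ × ℂ // p.1 * p.2 = 1}

/-- The relation on `X × ℝ` collapsing the two ends of the cylinder; the quotient is the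
unreduced suspension of `X`. -/
def suspRel (X : Type*) : X × ℝ → X × ℝ → Prop := fun p q =>
  (p.2 ≤ 0 ∧ q.2 ≤ 0) ∨ (1 ≤ p.2 ∧ 1 ≤ q.2)

/-- The unreduced suspension of a topological space, as a quotient of `X × ℝ`. -/
def Susp (X : Type*) [TopologicalSpace X] : Type _ := Quot (suspRel X)

instance (X : Type*) [TopologicalSpace X] : TopologicalSpace (Susp X) :=
  instTopologicalSpaceQuot

open Filter Topology Set

theorem Continuous.tendsto_comp_prodMk_of_compactSpace {X W Y Z : Type*} [TopologicalSpace X]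
    [TopologicalSpace W] [TopologicalSpace Y] [CompactSpace X] {g : X × W → Y}
    (hg : Continuous g) {w₀ : W} {y : Y} (hy : ∀ x, g (x, w₀) = y) {l : Filter Z} (f : Z → X)
    {t : Z → W} (ht : Tendsto t l (𝓝 w₀)) : Tendsto (fun z => g (f z, t z)) l (𝓝 y) := by
  have hft : Tendsto (fun z => (f z, t z)) l (𝓝ˢ (univ ×ˢ {w₀})) := by
    rw [isCompact_univ.nhdsSet_prod_eq isCompact_singleton, nhdsSet_singleton, nhdsSet_univ]
    exact tendsto_top.prodMk ht
  have hg' : Tendsto g (𝓝ˢ (univ ×ˢ {w₀})) (𝓝ˢ {y}) :=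
    hg.tendsto_nhdsSet fun ⟨x, _⟩ ⟨_, rfl⟩ => hy x
  rw [nhdsSet_singleton] at hg'
  exact hg'.comp hft

theorem OnePoint.continuous_ite_coe {Z X : Type*} [TopologicalSpace Z] [TopologicalSpace X]
    {P : Z → Prop} [DecidablePred P] {f : Z → X} (hP : IsOpen {z | P z})
    (hf : ContinuousOn f {z | P z})
    (hfr : ∀ z ∈ frontier {z | P z}, Tendsto f (𝓝[{z | P z}] z) (coclosedCompact X)) :
    Continuous fun z => if P z then (f z : OnePoint X) else ∞ := by
  refine continuous_iff_continuousAt.2 fun z => ?_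
  by_cases hz : P z
  · have hU : {z | P z} ∈ 𝓝 z := hP.mem_nhds hz
    exact (continuous_coe.continuousAt.comp (hf.continuousAt hU)).congr
      (eventually_of_mem hU fun w hw => (if_pos hw).symm)
  · have hlim : Tendsto f (𝓝[{z | P z}] z) (coclosedCompact X) := by
      by_cases hcl : z ∈ closure {z | P z}
      · exact hfr z ⟨hcl, by rwa [hP.interior_eq]⟩
      · rw [notMem_closure_iff_nhdsWithin_eq_bot.1 hcl]
        exact tendsto_bot
    rw [ContinuousAt, if_neg hz, ← nhdsWithin_univ, ← union_compl_self {z | P z},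
      nhdsWithin_union, tendsto_sup]
    exact ⟨(tendsto_coe_infty.comp hlim).congr'
        (eventually_nhdsWithin_of_forall fun w hw => (if_pos hw).symm),
      tendsto_const_nhds.congr' (eventually_nhdsWithin_of_forall fun w hw => (if_neg hw).symm)⟩

namespace Susp

theorem mk_eq_mk_of_nonpos {X : Type*} [TopologicalSpace X] {x y : X} {s t : ℝ} (hs : s ≤ 0)
    (ht : t ≤ 0) : (Quot.mk _ (x, s) : Susp X) = Quot.mk _ (y, t) :=
  Quot.sound (Or.inl ⟨hs, ht⟩)

theorem mk_eq_mk_of_one_le {X : Type*} [TopologicalSpace X] {x y : X} {s t : ℝ} (hs : 1 ≤ s)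
    (ht : 1 ≤ t) : (Quot.mk _ (x, s) : Susp X) = Quot.mk _ (y, t) :=
  Quot.sound (Or.inr ⟨hs, ht⟩)

variable {X Y : Type*} [TopologicalSpace X] [TopologicalSpace Y]

def map (f : C(X, Y)) : C(Susp X, Susp Y) where
  toFun := Quot.map (Prod.map f id) fun _ _ h => h
  continuous_toFun :=
    continuous_quot_lift _ (continuous_quot_mk.comp (f.continuous.prodMap continuous_id))

def mapHomotopy {T : Type*} [TopologicalSpace T] [LocallyCompactSpace T] (F : C(T × X, Y)) :
    C(T × Susp X, Susp Y) where
  toFun p := Quot.map (fun q : X × ℝ => (F (p.1, q.1), q.2)) (fun _ _ h => h) p.2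
  continuous_toFun := isQuotientMap_quot_mk.continuous_lift_prod_right <|
    continuous_quot_mk.comp <|
      (F.continuous.comp (continuous_fst.prodMk (continuous_fst.comp continuous_snd))).prodMk
        (continuous_snd.comp continuous_snd)

end Susp

noncomputable section

namespace Complex

def direction (z : ℂ) : Circle :=
  if hz : z = 0 then 1 else ⟨z / ‖z‖, mem_sphere_zero_iff_norm.2 (by simp [hz])⟩

theorem coe_direction_of_ne_zero {z : ℂ} (hz : z ≠ 0) : (direction z : ℂ) = z / ‖z‖ := by
  simp [direction, hz]

theorem norm_mul_direction (z : ℂ) : ‖z‖ * (direction z : ℂ) = z := by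
  rcases eq_or_ne z 0 with rfl | hz
  · simp
  · rw [coe_direction_of_ne_zero hz, mul_div_cancel₀ _ (ofReal_ne_zero.2 (norm_ne_zero_iff.2 hz))]

theorem direction_eq_of_eq_mul {z : ℂ} {r : ℝ} (hr : 0 < r) (u : Circle) (h : z = r * u) :
    direction z = u := by
  have hz : z ≠ 0 := h ▸ mul_ne_zero (ofReal_ne_zero.2 hr.ne') u.coe_ne_zero
  have hnorm : ‖z‖ = r := by
    rw [h, norm_mul, Circle.norm_coe, mul_one, norm_real, Real.norm_of_nonneg hr.le]
  ext
  rw [coe_direction_of_ne_zero hz, hnorm, h, mul_div_cancel_left₀ _ (ofReal_ne_zero.2 hr.ne')]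

theorem direction_coe (u : Circle) : direction u = u :=
  direction_eq_of_eq_mul one_pos u (by simp)

theorem direction_mul {z : ℂ} (hz : z ≠ 0) (c : Circle) :
    direction (c * z) = c * direction z :=
  direction_eq_of_eq_mul (norm_pos_iff.2 hz) _ <| by
    rw [Circle.coe_mul, mul_left_comm, norm_mul_direction]

theorem continuousAt_direction {z : ℂ} (hz : z ≠ 0) : ContinuousAt direction z := by
  apply (IsInducing.subtypeVal : IsInducing ((↑) : Circle → ℂ)).continuousAt_iff.2
  refine (continuousAt_id.div (continuous_ofReal.comp continuous_norm).continuousAt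
    (ofReal_ne_zero.2 (norm_ne_zero_iff.2 hz))).congr ?_
  filter_upwards [isOpen_ne.mem_nhds hz] with w hw
  exact (coe_direction_of_ne_zero hw).symm

end Complex

namespace MilnorFiberVW

theorem fst_ne_zero (p : MilnorFiberVW) : p.1.1 ≠ 0 := left_ne_zero_of_mul_eq_one p.2

theorem snd_eq_inv (p : MilnorFiberVW) : p.1.2 = p.1.1⁻¹ :=
  (inv_eq_of_mul_eq_one_right p.2).symm

theorem continuous_direction_fst : Continuous fun p : MilnorFiberVW => direction p.1.1 :=
  continuous_iff_continuousAt.2 fun p =>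
    ContinuousAt.comp (f := fun p : MilnorFiberVW => p.1.1) (continuousAt_direction p.fst_ne_zero)
      (by fun_prop)

def ofCircle (u : Circle) : MilnorFiberVW := ⟨(u, (u : ℂ)⁻¹), mul_inv_cancel₀ u.coe_ne_zero⟩

theorem continuous_ofCircle : Continuous ofCircle :=
  (continuous_subtype_val.prodMk (continuous_subtype_val.inv₀ Circle.coe_ne_zero)).subtype_mk _

def rotate (c : Circle) : C(MilnorFiberVW, MilnorFiberVW) where
  toFun p := ⟨(c * p.1.1, (c : ℂ)⁻¹ * p.1.2), by
    rw [mul_mul_mul_comm, mul_inv_cancel₀ c.coe_ne_zero, p.2, one_mul]⟩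

theorem rotate_ofCircle (c u : Circle) : rotate c (ofCircle u) = ofCircle (c * u) := by
  ext <;> simp [rotate, ofCircle, mul_comm]

def retraction : C(ℝ × MilnorFiberVW, MilnorFiberVW) where
  toFun q := ⟨((‖q.2.1.1‖ ^ (q.1 - 1) : ℝ) * q.2.1.1, (‖q.2.1.1‖ ^ (1 - q.1) : ℝ) * q.2.1.2), by
    rw [mul_mul_mul_comm, q.2.2, mul_one, ← ofReal_mul,
      ← Real.rpow_add (norm_pos_iff.2 q.2.fst_ne_zero)]
    simp⟩
  continuous_toFun := by
    refine Continuous.subtype_mk ?_ _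
    have hv : Continuous fun q : ℝ × MilnorFiberVW => q.2.1.1 := by fun_prop
    have h₁ : Continuous fun q : ℝ × MilnorFiberVW => ‖q.2.1.1‖ ^ (q.1 - 1) :=
      hv.norm.rpow (continuous_fst.sub continuous_const)
        fun q => Or.inl (norm_ne_zero_iff.2 q.2.fst_ne_zero)
    have h₂ : Continuous fun q : ℝ × MilnorFiberVW => ‖q.2.1.1‖ ^ (1 - q.1) :=
      hv.norm.rpow (continuous_const.sub continuous_fst)
        fun q => Or.inl (norm_ne_zero_iff.2 q.2.fst_ne_zero)
    fun_prop

theorem retraction_zero (p : MilnorFiberVW) :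
    retraction (0, p) = ofCircle (direction p.1.1) := by
  have hp := p.fst_ne_zero
  ext
  · simp [retraction, ofCircle, coe_direction_of_ne_zero hp, Real.rpow_neg_one, div_eq_inv_mul]
  · simp [retraction, ofCircle, coe_direction_of_ne_zero hp, p.snd_eq_inv, div_eq_mul_inv]

theorem retraction_one (p : MilnorFiberVW) : retraction (1, p) = p := by
  ext <;> simp [retraction]

theorem retraction_rotate (t : ℝ) (c : Circle) (p : MilnorFiberVW) :
    retraction (t, rotate c p) = rotate c (retraction (t, p)) := by
  ext <;> simp only [retraction, rotate, ContinuousMap.coe_mk, norm_mul, Circle.norm_coe,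
    one_mul] <;> ring

def radius (s : ℝ) : ℝ := max s 0 / (1 - s)

def height (z : ℂ) : ℝ := ‖z‖ / (1 + ‖z‖)

theorem radius_of_nonpos {s : ℝ} (hs : s ≤ 0) : radius s = 0 := by
  simp [radius, max_eq_right hs]

theorem radius_pos {s : ℝ} (hs₀ : 0 < s) (hs₁ : s < 1) : 0 < radius s :=
  div_pos (lt_max_of_lt_left hs₀) (sub_pos.2 hs₁)

theorem continuousOn_radius : ContinuousOn radius (Iio 1) :=
  (continuous_id.max continuous_const).continuousOn.div
    (continuous_const.sub continuous_id).continuousOn fun _ hs => (sub_pos.2 hs).ne'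

theorem tendsto_radius : Tendsto radius (𝓝[<] 1) atTop := by
  have hnum : Tendsto (fun s : ℝ => max s 0) (𝓝[<] 1) (𝓝 1) :=
    ((continuous_id.max continuous_const).tendsto' 1 1 (by simp)).mono_left nhdsWithin_le_nhds
  have hden : Tendsto (fun s : ℝ => 1 - s) (𝓝[<] 1) (𝓝[>] 0) := by
    refine tendsto_nhdsWithin_of_tendsto_nhds_of_eventually_within _ ?_ ?_
    · exact ((continuous_const.sub continuous_id).tendsto' 1 0 (sub_self 1)).mono_left
        nhdsWithin_le_nhds
    · exact eventually_nhdsWithin_of_forall fun s (hs : s < 1) => show 0 < 1 - s from sub_pos.2 hs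
  exact hnum.pos_mul_atTop one_pos (tendsto_inv_nhdsGT_zero.comp hden)

theorem height_lt_one (z : ℂ) : height z < 1 :=
  (div_lt_one (by positivity)).2 (lt_one_add _)

@[simp] theorem height_zero : height 0 = 0 := by simp [height]

theorem continuous_height : Continuous height :=
  continuous_norm.div (continuous_const.add continuous_norm) fun _ => by positivity

theorem tendsto_height_cocompact : Tendsto height (cocompact ℂ) (𝓝 1) := by
  have h : height = fun z => 1 - (1 + ‖z‖)⁻¹ := by
    ext z
    have : 1 + ‖z‖ ≠ 0 := by positivity
    rw [height]
    field_simp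
    ring
  rw [h]
  simpa using tendsto_const_nhds.sub (tendsto_inv_atTop_zero.comp
    (tendsto_atTop_add_const_left _ 1 tendsto_norm_cocompact_atTop))

theorem radius_height (z : ℂ) : radius (height z) = ‖z‖ := by
  have h₀ : 0 ≤ height z := by unfold height; positivity
  have : 1 + ‖z‖ ≠ 0 := by positivity
  rw [radius, max_eq_left h₀, height]
  field_simp
  ring

theorem height_radius_mul {s : ℝ} (hs₀ : 0 < s) (hs₁ : s < 1) (u : Circle) :
    height (radius s * u) = s := by
  rw [height, norm_mul, Circle.norm_coe, mul_one, norm_real,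
    Real.norm_of_nonneg (radius_pos hs₀ hs₁).le, radius, max_eq_left hs₀.le]
  have : 1 - s ≠ 0 := (sub_pos.2 hs₁).ne'
  field_simp
  ring

def toSphere (p : MilnorFiberVW × ℝ) : OnePoint ℂ :=
  if p.2 < 1 then ((radius p.2 * direction p.1.1.1 : ℂ) : OnePoint ℂ) else ∞

theorem continuous_toSphere : Continuous toSphere := by
  refine OnePoint.continuous_ite_coe (isOpen_lt continuous_snd continuous_const) ?_
    fun p hp => ?_
  · exact (continuous_ofReal.comp_continuousOn
      (continuousOn_radius.comp continuous_snd.continuousOn fun _ h => h)).mul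
      (continuous_subtype_val.comp (continuous_direction_fst.comp continuous_fst)).continuousOn
  · have hp₁ : p.2 = 1 := frontier_lt_subset_eq continuous_snd continuous_const hp
    have hsnd : Tendsto Prod.snd (𝓝[{q : MilnorFiberVW × ℝ | q.2 < 1}] p) (𝓝[<] 1) :=
      hp₁ ▸ continuous_snd.continuousWithinAt.tendsto_nhdsWithin fun _ h => h
    rw [coclosedCompact_eq_cocompact]
    refine tendsto_cocompact_of_tendsto_dist_comp_atTop 0 ?_
    simpa [Circle.norm_coe, Function.comp_def] using
      tendsto_abs_atTop_atTop.comp (tendsto_radius.comp hsnd)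

theorem toSphere_eq_of_suspRel {p q : MilnorFiberVW × ℝ} (h : suspRel MilnorFiberVW p q) :
    toSphere p = toSphere q := by
  rcases h with ⟨hp, hq⟩ | ⟨hp, hq⟩
  · simp [toSphere, hp.trans_lt one_pos, hq.trans_lt one_pos, radius_of_nonpos hp,
      radius_of_nonpos hq]
  · simp [toSphere, hp.not_gt, hq.not_gt]

def suspToSphere : C(Susp MilnorFiberVW, OnePoint ℂ) :=
  ⟨Quot.lift toSphere fun _ _ => toSphere_eq_of_suspRel,
    continuous_quot_lift _ continuous_toSphere⟩

def sphereToSusp : C(OnePoint ℂ, Susp MilnorFiberVW) where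
  toFun y :=
    y.elim (Quot.mk _ (ofCircle 1, 1)) fun z => Quot.mk _ (ofCircle (direction z), height z)
  continuous_toFun := by
    have hg : Continuous fun p : Circle × ℝ =>
        (Quot.mk _ (ofCircle p.1, p.2) : Susp MilnorFiberVW) :=
      continuous_quot_mk.comp ((continuous_ofCircle.comp continuous_fst).prodMk continuous_snd)
    refine (OnePoint.continuous_iff _).2 ⟨?_, continuous_iff_continuousAt.2 fun z => ?_⟩
    · rw [coclosedCompact_eq_cocompact]
      exact hg.tendsto_comp_prodMk_of_compactSpace
        (fun _ => Susp.mk_eq_mk_of_one_le le_rfl le_rfl) direction tendsto_height_cocompact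
    · rcases eq_or_ne z 0 with rfl | hz
      · exact hg.tendsto_comp_prodMk_of_compactSpace
          (fun _ => Susp.mk_eq_mk_of_nonpos le_rfl height_zero.le) direction
          (continuous_height.tendsto' 0 0 height_zero)
      · exact hg.continuousAt.comp
          ((continuousAt_direction hz).prodMk continuous_height.continuousAt)

theorem suspToSphere_sphereToSusp (y : OnePoint ℂ) : suspToSphere (sphereToSusp y) = y := by
  induction y using OnePoint.rec with
  | infty => exact if_neg (lt_irrefl 1)
  | coe z =>
    change toSphere (ofCircle (direction z), height z) = z
    rw [toSphere, if_pos (height_lt_one z)]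
    change ((radius (height z) * (direction (direction z : ℂ)) : ℂ) : OnePoint ℂ) = z
    rw [direction_coe, radius_height, norm_mul_direction]

theorem mapHomotopy_retraction_zero (x : Susp MilnorFiberVW) :
    Susp.mapHomotopy retraction (0, x) = sphereToSusp (suspToSphere x) := by
  induction x using Quot.ind with | mk q => ?_
  obtain ⟨p, s⟩ := q
  change Quot.mk _ (retraction (0, p), s) = sphereToSusp (toSphere (p, s))
  rw [retraction_zero, toSphere]
  by_cases hs₁ : s < 1
  · rw [if_pos hs₁]
    rcases le_or_gt s 0 with hs₀ | hs₀
    · rw [radius_of_nonpos hs₀, ofReal_zero, zero_mul]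
      exact Susp.mk_eq_mk_of_nonpos hs₀ height_zero.le
    · change _ = Quot.mk _ (ofCircle (direction _), height _)
      rw [direction_eq_of_eq_mul (radius_pos hs₀ hs₁) _ rfl, height_radius_mul hs₀ hs₁]
  · rw [if_neg hs₁]
    exact Susp.mk_eq_mk_of_one_le (not_lt.1 hs₁) le_rfl

theorem mapHomotopy_retraction_one (x : Susp MilnorFiberVW) :
    Susp.mapHomotopy retraction (1, x) = x := by
  induction x using Quot.ind with
  | mk q =>
    change Quot.mk _ (retraction (1, q.1), q.2) = Quot.mk _ q
    rw [retraction_one]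

theorem mapHomotopy_retraction_map_rotate (c : Circle) (t : ℝ) (x : Susp MilnorFiberVW) :
    Susp.mapHomotopy retraction (t, Susp.map (rotate c) x) =
      Susp.map (rotate c) (Susp.mapHomotopy retraction (t, x)) := by
  induction x using Quot.ind with
  | mk q =>
    change Quot.mk _ (retraction (t, rotate c q.1), q.2) =
      Quot.mk _ (rotate c (retraction (t, q.1)), q.2)
    rw [retraction_rotate]

theorem suspToSphere_map_rotate (c : Circle) (x : Susp MilnorFiberVW) :
    suspToSphere (Susp.map (rotate c) x) = OnePoint.map ((c : ℂ) * ·) (suspToSphere x) := by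
  induction x using Quot.ind with | mk q => ?_
  obtain ⟨p, s⟩ := q
  change toSphere (rotate c p, s) = OnePoint.map _ (toSphere (p, s))
  by_cases hs : s < 1
  · simp only [toSphere, if_pos hs, OnePoint.map_some]
    change ((radius s * direction (c * p.1.1) : ℂ) : OnePoint ℂ) = _
    rw [direction_mul p.fst_ne_zero, Circle.coe_mul, mul_left_comm]
  · simp only [toSphere, if_neg hs, OnePoint.map_infty]

theorem sphereToSusp_map_mul (c : Circle) (y : OnePoint ℂ) :
    sphereToSusp (OnePoint.map ((c : ℂ) * ·) y) = Susp.map (rotate c) (sphereToSusp y) := by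
  induction y using OnePoint.rec with
  | infty => exact Susp.mk_eq_mk_of_one_le le_rfl le_rfl
  | coe z =>
    rcases eq_or_ne z 0 with rfl | hz
    · change Quot.mk _ (_, height (c * 0)) = Quot.mk _ (_, height 0)
      exact Susp.mk_eq_mk_of_nonpos (by simp) (by simp)
    · change Quot.mk _ (ofCircle (direction (c * z)), height (c * z)) =
        Quot.mk _ (rotate c (ofCircle (direction z)), height z)
      rw [direction_mul hz, rotate_ofCircle, height, height, norm_mul, Circle.norm_coe, one_mul]

end MilnorFiberVW

end

open MilnorFiberVW in
theorem suspension_milnor_fiber_vw_equiv_representation_sphere_general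
    (a b d : ℕ) (hd : d = a + b)
    (ζ : ℂ) (hζ : ζ = Complex.exp (2 * Real.pi * Complex.I / d)) :
    ∃ σ : MilnorFiberVW → MilnorFiberVW,
      Continuous σ ∧
      (∀ p : MilnorFiberVW,
        ((σ p : ℂ × ℂ)) = (ζ ^ a * (p : ℂ × ℂ).1, ζ ^ b * (p : ℂ × ℂ).2)) ∧
      ∃ σS : C(Susp MilnorFiberVW, Susp MilnorFiberVW),
        (∀ (x : MilnorFiberVW) (t : ℝ),
          σS (Quot.mk _ (x, t)) = Quot.mk _ (σ x, t)) ∧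
      ∃ τ : C(OnePoint ℂ, OnePoint ℂ),
        τ ∞ = ∞ ∧ (∀ z : ℂ, τ (z : OnePoint ℂ) = ((ζ ^ a * z : ℂ) : OnePoint ℂ)) ∧
      ∃ (φ : C(Susp MilnorFiberVW, OnePoint ℂ)) (ψ : C(OnePoint ℂ, Susp MilnorFiberVW)),
        (∀ x, φ (σS x) = τ (φ x)) ∧
        (∀ y, ψ (τ y) = σS (ψ y)) ∧
        (∃ H : C(ℝ × Susp MilnorFiberVW, Susp MilnorFiberVW),
          (∀ x, H (0, x) = ψ (φ x)) ∧ (∀ x, H (1, x) = x) ∧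
          (∀ (t : ℝ) (x), H (t, σS x) = σS (H (t, x)))) ∧
        (∃ K : C(ℝ × OnePoint ℂ, OnePoint ℂ),
          (∀ y, K (0, y) = φ (ψ y)) ∧ (∀ y, K (1, y) = y) ∧
          (∀ (t : ℝ) (y), K (t, τ y) = τ (K (t, y)))) := by
  set u : Circle := Circle.exp (2 * Real.pi / d)
  have hζu : ζ = u := by
    rw [hζ, Circle.coe_exp]
    push_cast
    ring_nf
  have hud : u ^ d = 1 := by
    rcases eq_or_ne d 0 with rfl | hd₀
    · exact pow_zero u
    · rw [← Circle.exp_natCast_mul, mul_div_cancel₀ _ (Nat.cast_ne_zero.2 hd₀), Circle.exp_two_pi]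
  have hζa : ζ ^ a = ((u ^ a : Circle) : ℂ) := by rw [hζu, Circle.coe_pow]
  have hζb : ζ ^ b = ((u ^ a : Circle) : ℂ)⁻¹ := by
    rw [← Circle.coe_inv, inv_eq_of_mul_eq_one_right (by rw [← pow_add, ← hd, hud]), hζu,
      Circle.coe_pow]
  refine ⟨rotate (u ^ a), (rotate _).continuous, fun p => ?_, Susp.map (rotate (u ^ a)),
    fun _ _ => rfl, (Homeomorph.mulLeft₀ _ (u ^ a).coe_ne_zero).onePointCongr, rfl,
    fun z => by simp [hζa], suspToSphere, sphereToSusp, suspToSphere_map_rotate _,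
    sphereToSusp_map_mul _,
    ⟨Susp.mapHomotopy retraction, mapHomotopy_retraction_zero, mapHomotopy_retraction_one,
      mapHomotopy_retraction_map_rotate _⟩,
    ⟨ContinuousMap.snd, fun y => (suspToSphere_sphereToSusp y).symm, fun _ => rfl,
      fun _ _ => rfl⟩⟩
  rw [hζa, hζb]
  rfl

/-- for `d = a + b` and `ζ = exp(2πi/d)`, the unreduced suspension of the
Milnor fiber `F = {vw = 1}` (with monodromy generated by `σ(v,w) = (ζᵃv, ζᵇw)`) is
`μ_d`-equivariantly homotopy equivalent to the representation sphere `S^V = ℂ ∪ {∞}`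
of the one-dimensional representation on which `ζ` acts as multiplication by `ζᵃ`. -/
theorem suspension_milnor_fiber_vw_equiv_representation_sphere
    (a b d : ℕ) (ha : 0 < a) (hb : 0 < b) (hd : d = a + b)
    (ζ : ℂ) (hζ : ζ = Complex.exp (2 * Real.pi * Complex.I / d)) :
    ∃ σ : MilnorFiberVW → MilnorFiberVW,
      Continuous σ ∧
      (∀ p : MilnorFiberVW,
        ((σ p : ℂ × ℂ)) = (ζ ^ a * (p : ℂ × ℂ).1, ζ ^ b * (p : ℂ × ℂ).2)) ∧
      ∃ σS : C(Susp MilnorFiberVW, Susp MilnorFiberVW),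
        (∀ (x : MilnorFiberVW) (t : ℝ),
          σS (Quot.mk _ (x, t)) = Quot.mk _ (σ x, t)) ∧
      ∃ τ : C(OnePoint ℂ, OnePoint ℂ),
        τ ∞ = ∞ ∧ (∀ z : ℂ, τ (z : OnePoint ℂ) = ((ζ ^ a * z : ℂ) : OnePoint ℂ)) ∧
      ∃ (φ : C(Susp MilnorFiberVW, OnePoint ℂ)) (ψ : C(OnePoint ℂ, Susp MilnorFiberVW)),
        (∀ x, φ (σS x) = τ (φ x)) ∧
        (∀ y, ψ (τ y) = σS (ψ y)) ∧
        (∃ H : C(ℝ × Susp MilnorFiberVW, Susp MilnorFiberVW),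
          (∀ x, H (0, x) = ψ (φ x)) ∧ (∀ x, H (1, x) = x) ∧
          (∀ (t : ℝ) (x), H (t, σS x) = σS (H (t, x)))) ∧
        (∃ K : C(ℝ × OnePoint ℂ, OnePoint ℂ),
          (∀ y, K (0, y) = φ (ψ y)) ∧ (∀ y, K (1, y) = y) ∧
          (∀ (t : ℝ) (y), K (t, τ y) = τ (K (t, y)))) :=
  suspension_milnor_fiber_vw_equiv_representation_sphere_general a b d hd ζ hζ
end

section
/- Let n > 2, and consider the integer matrix A of size n × (n−1) (for n odd) given in the paper: A has −1 on the diagonal entries (j,j) for 1 ≤ j ≤ n−2, entries +1 at positions (j+2, j) for 1 ≤ j ≤ n−2, entry −2^{(n−1)/2} at position (n−1, n−1) and +2^{(n−1)/2} at position (n, n−1), all other entries zero. Then A : ℤ^{n−1} → ℤⁿ is injective, and its cokernel is isomorphic to ℤ ⊕ ℤ/2^{(n−1)/2}ℤ. -/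
/-!
Over any commutative ring, the matrix with corner entry `c` factors as `D ∘ ι`, where
`(D z)ᵢ = zᵢ₋₂ - zᵢ` is lower triangular with diagonal `-1`, hence invertible, and
`ι x = (x₀, …, x_{n-3}, c x_{n-2}, -c x_{n-2})`. So `A` is injective as soon as `ι` is, and
`coker A ≅ coker ι`; over `ℤ` the map `z ↦ (z_{n-2} + z_{n-1}, z_{n-2} mod c)` identifies
`coker ι` with `ℤ × ℤ/c`.
-/

namespace PushforwardMatrix

variable {R : Type*} [CommRing R]

def shiftTwoSub (k : ℕ) : Module.End R (Fin k → R) where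
  toFun z i := (if h : 2 ≤ (i : ℕ) then z ⟨i - 2, by omega⟩ else 0) - z i
  map_add' y z := by ext i; simp only [Pi.add_apply]; split_ifs <;> ring
  map_smul' c z := by
    ext i; simp only [Pi.smul_apply, smul_eq_mul, RingHom.id_apply]; split_ifs <;> ring

lemma shiftTwoSub_apply (k : ℕ) (z : Fin k → R) (i : Fin k) :
    shiftTwoSub k z i = (if h : 2 ≤ (i : ℕ) then z ⟨i - 2, by omega⟩ else 0) - z i := rfl

lemma toMatrix'_shiftTwoSub_apply (k : ℕ) (i j : Fin k) :
    LinearMap.toMatrix' (shiftTwoSub (R := R) k) i j =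
      (if (i : ℕ) = j + 2 then 1 else 0) - if i = j then 1 else 0 := by
  simp only [LinearMap.toMatrix'_apply, shiftTwoSub_apply, Pi.single_apply, Fin.ext_iff]
  split_ifs <;> first | omega | rfl

lemma det_shiftTwoSub (k : ℕ) : LinearMap.det (shiftTwoSub (R := R) k) = (-1) ^ k := by
  have hlower : (LinearMap.toMatrix' (shiftTwoSub (R := R) k)).IsLowerTriangular := by
    intro i j (hij : i < j)
    rw [toMatrix'_shiftTwoSub_apply, if_neg (by omega), if_neg hij.ne, sub_zero]
  have hdiag (i : Fin k) : LinearMap.toMatrix' (shiftTwoSub (R := R) k) i i = -1 := by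
    rw [toMatrix'_shiftTwoSub_apply, if_neg (by omega), if_pos rfl, zero_sub]
  rw [← LinearMap.det_toMatrix', Matrix.det_of_isLowerTriangular _ hlower]
  simp [hdiag]

lemma shiftTwoSub_bijective (k : ℕ) : Function.Bijective (shiftTwoSub (R := R) k) := by
  rw [← Module.End.isUnit_iff, LinearMap.isUnit_iff_isUnit_det, det_shiftTwoSub]
  exact isUnit_neg_one.pow k

/-- The matrix `A` of the statement for `n = m + 2`, with `c` in place of `2 ^ ((n - 1) / 2)`. -/
def pushforwardMatrix (m : ℕ) (c : R) : Matrix (Fin (m + 2)) (Fin (m + 1)) R := fun i j =>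
  if (i : ℕ) = j ∧ (j : ℕ) < m then -1
  else if (i : ℕ) = j + 2 ∧ (j : ℕ) < m then 1
  else if (i : ℕ) = m ∧ (j : ℕ) = m then -c
  else if (i : ℕ) = m + 1 ∧ (j : ℕ) = m then c
  else 0

def spreadLast (m : ℕ) (c : R) : (Fin (m + 1) → R) →ₗ[R] (Fin (m + 2) → R) where
  toFun x i := if h : (i : ℕ) < m then x ⟨i, by omega⟩
    else if (i : ℕ) = m then c * x (Fin.last m) else -(c * x (Fin.last m))
  map_add' x y := by ext i; simp only [Pi.add_apply]; split_ifs <;> ring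
  map_smul' a x := by
    ext i; simp only [Pi.smul_apply, smul_eq_mul, RingHom.id_apply]; split_ifs <;> ring

lemma spreadLast_apply (m : ℕ) (c : R) (x : Fin (m + 1) → R) (i : Fin (m + 2)) :
    spreadLast m c x i = if h : (i : ℕ) < m then x ⟨i, by omega⟩
      else if (i : ℕ) = m then c * x (Fin.last m) else -(c * x (Fin.last m)) := rfl

lemma mulVecLin_pushforwardMatrix (m : ℕ) (c : R) :
    (pushforwardMatrix m c).mulVecLin = shiftTwoSub (m + 2) ∘ₗ spreadLast m c := by
  ext j i
  simp only [LinearMap.comp_apply, LinearMap.single_apply, Matrix.mulVecLin_apply,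
    Matrix.mulVec_single_one, Matrix.col_apply, shiftTwoSub_apply, spreadLast_apply,
    pushforwardMatrix, Pi.single_apply, Fin.ext_iff, Fin.val_last]
  split_ifs <;> first | omega | ring

lemma spreadLast_injective [NoZeroDivisors R] (m : ℕ) {c : R} (hc : c ≠ 0) :
    Function.Injective (spreadLast m c) := by
  rw [← LinearMap.ker_eq_bot, LinearMap.ker_eq_bot']
  intro x hx
  ext j
  by_cases hj : (j : ℕ) < m
  · simpa [spreadLast_apply, hj] using congrFun hx j.castSucc
  · have hlast : j = Fin.last m := Fin.ext (by simp only [Fin.val_last]; omega)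
    have := congrFun hx ⟨m, by omega⟩
    simp only [spreadLast_apply, lt_irrefl, dite_false, if_true, Pi.zero_apply] at this
    simpa [hlast, hc] using this

def spreadLastCokernelMap (m N : ℕ) : (Fin (m + 2) → ℤ) →ₗ[ℤ] ℤ × ZMod N where
  toFun z := (z (Fin.last m).castSucc + z (Fin.last (m + 1)), z (Fin.last m).castSucc)
  map_add' y z := by simp [add_add_add_comm]
  map_smul' a z := by simp [mul_add]

lemma spreadLastCokernelMap_apply (m N : ℕ) (z : Fin (m + 2) → ℤ) :
    spreadLastCokernelMap m N z =
      (z (Fin.last m).castSucc + z (Fin.last (m + 1)), (z (Fin.last m).castSucc : ZMod N)) :=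
  rfl

lemma spreadLastCokernelMap_surjective (m N : ℕ) :
    Function.Surjective (spreadLastCokernelMap m N) := by
  rintro ⟨a, b⟩
  obtain ⟨t, rfl⟩ := ZMod.intCast_surjective b
  refine ⟨fun i => if (i : ℕ) = m then t else if (i : ℕ) = m + 1 then a - t else 0, ?_⟩
  simp [spreadLastCokernelMap_apply]

lemma ker_spreadLastCokernelMap (m N : ℕ) :
    LinearMap.ker (spreadLastCokernelMap m N) = LinearMap.range (spreadLast m (N : ℤ)) := by
  ext z
  simp only [LinearMap.mem_ker, spreadLastCokernelMap_apply, Prod.mk_eq_zero,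
    ZMod.intCast_zmod_eq_zero_iff_dvd, LinearMap.mem_range]
  constructor
  · rintro ⟨hsum, t, ht⟩
    refine ⟨fun j => if (j : ℕ) < m then z j.castSucc else t, ?_⟩
    ext i
    simp only [spreadLast_apply, Fin.val_last, lt_irrefl, if_false]
    split_ifs with h1 h2
    · rfl
    · rw [← ht]; congr 1; exact Fin.ext h2.symm
    · have hi : i = Fin.last (m + 1) := Fin.ext (by simp only [Fin.val_last]; omega)
      rw [hi]; linarith
  · rintro ⟨x, rfl⟩
    simp [spreadLast_apply]

lemma mulVecLin_pushforwardMatrix_injective [NoZeroDivisors R] (m : ℕ) {c : R} (hc : c ≠ 0) :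
    Function.Injective (pushforwardMatrix m c).mulVecLin := by
  rw [mulVecLin_pushforwardMatrix, LinearMap.coe_comp]
  exact (shiftTwoSub_bijective _).injective.comp (spreadLast_injective m hc)

noncomputable def pushforwardMatrixCokernelEquiv (m N : ℕ) :
    ((Fin (m + 2) → ℤ) ⧸ LinearMap.range (pushforwardMatrix m (N : ℤ)).mulVecLin) ≃ₗ[ℤ]
      ℤ × ZMod N :=
  (Submodule.Quotient.equiv _ _ (LinearEquiv.ofBijective _ (shiftTwoSub_bijective (m + 2)))
      (by rw [mulVecLin_pushforwardMatrix, LinearMap.range_comp]; rfl)).symm ≪≫ₗ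
    Submodule.quotEquivOfEq _ _ (ker_spreadLastCokernelMap m N).symm ≪≫ₗ
    (spreadLastCokernelMap m N).quotKerEquivOfSurjective (spreadLastCokernelMap_surjective m N)

end PushforwardMatrix

theorem pushforward_matrix_odd_general
    (n : ℕ) (hn : 2 < n)
    (A : Matrix (Fin n) (Fin (n - 1)) ℤ)
    (hA : ∀ (i : Fin n) (j : Fin (n - 1)),
      A i j =
        if (i : ℕ) = (j : ℕ) ∧ (j : ℕ) < n - 2 then -1
        else if (i : ℕ) = (j : ℕ) + 2 ∧ (j : ℕ) < n - 2 then 1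
        else if (i : ℕ) = n - 2 ∧ (j : ℕ) = n - 2 then -(2 ^ ((n - 1) / 2))
        else if (i : ℕ) = n - 1 ∧ (j : ℕ) = n - 2 then 2 ^ ((n - 1) / 2)
        else 0) :
    Function.Injective A.mulVecLin ∧
      Nonempty (((Fin n → ℤ) ⧸ LinearMap.range A.mulVecLin) ≃ₗ[ℤ]
        ℤ × ZMod (2 ^ ((n - 1) / 2))) := by
  obtain ⟨m, rfl⟩ : ∃ m, n = m + 2 := ⟨n - 2, by omega⟩
  obtain rfl : A = PushforwardMatrix.pushforwardMatrix m ((2 ^ ((m + 1) / 2) : ℕ) : ℤ) := by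
    ext i j
    rw [hA]
    simp [PushforwardMatrix.pushforwardMatrix]
  exact ⟨PushforwardMatrix.mulVecLin_pushforwardMatrix_injective m (by positivity),
    ⟨PushforwardMatrix.pushforwardMatrixCokernelEquiv m _⟩⟩

/-- for odd `n > 2`, the integer matrix `A : ℤ^{n−1} → ℤⁿ` from the
push-forward computation is injective with cokernel `ℤ ⊕ ℤ/2^{(n−1)/2}ℤ`. -/
theorem pushforward_matrix_odd
    (n : ℕ) (hn : 2 < n) (hodd : Odd n)
    (A : Matrix (Fin n) (Fin (n - 1)) ℤ)
    (hA : ∀ (i : Fin n) (j : Fin (n - 1)),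
      A i j =
        if (i : ℕ) = (j : ℕ) ∧ (j : ℕ) < n - 2 then -1
        else if (i : ℕ) = (j : ℕ) + 2 ∧ (j : ℕ) < n - 2 then 1
        else if (i : ℕ) = n - 2 ∧ (j : ℕ) = n - 2 then -(2 ^ ((n - 1) / 2))
        else if (i : ℕ) = n - 1 ∧ (j : ℕ) = n - 2 then 2 ^ ((n - 1) / 2)
        else 0) :
    Function.Injective A.mulVecLin ∧
      Nonempty (((Fin n → ℤ) ⧸ LinearMap.range A.mulVecLin) ≃ₗ[ℤ]
        ℤ × ZMod (2 ^ ((n - 1) / 2))) :=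
  pushforward_matrix_odd_general n hn A hA
end

section
/- Let n > 2 be even, and consider the integer n × n matrix B with entries: B(j,j) = −1 for 1 ≤ j ≤ n−2, B(j+2, j) = 1 for 1 ≤ j ≤ n−2, B(n−1, n−1) = B(n−1, n) = −2^{(n−2)/2}, B(n, n−1) = B(n, n) = 2^{(n−2)/2}, all other entries zero. Then the kernel of B : ℤⁿ → ℤⁿ is isomorphic to ℤ, and the cokernel of B is isomorphic to ℤ ⊕ ℤ/2^{(n−2)/2}ℤ. -/
/-!
The columns of `B` are `e (j + 2) - e j` for `j < n - 2`, and `K • (e (n - 1) - e (n - 2))` twice,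
where `K = 2 ^ ((n - 2) / 2)`. Modulo the former, every `e i` is congruent to `e (n - 2)` or to
`e (n - 1)` according to the parity of `i`, so the cokernel is `ℤ² / ℤ (-K, K) ≃ ℤ × ℤ/K`, realised
by `y ↦ (∑ i, y i, ∑ i ≡ n, y i mod K)`. The kernel is a subgroup of `ℤⁿ`, hence free, and by
rank-nullity its rank is the rank of the cokernel, namely `1`.
-/

open Module LinearMap

theorem finrank_ker_eq_finrank_quotient_range {R M : Type*} [CommRing R] [IsDomain R]
    [AddCommGroup M] [Module R M] [Module.Finite R M] (f : M →ₗ[R] M) :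
    finrank R (ker f) = finrank R (M ⧸ range f) := by
  have hrange := (range f).finrank_quotient_add_finrank
  have hker := (ker f).finrank_quotient_add_finrank
  rw [f.quotKerEquivRange.finrank_eq] at hker
  omega

theorem finrank_int_prod_zmod (K : ℕ) [NeZero K] : finrank ℤ (ℤ × ZMod K) = 1 := by
  have htorsion : IsTorsion ℤ (ker (fst ℤ ℤ (ZMod K))) := by
    rintro ⟨⟨a, z⟩, ha⟩
    obtain rfl : a = 0 := ha
    refine ⟨⟨K, mem_nonZeroDivisors_of_ne_zero (by exact_mod_cast NeZero.ne K)⟩, ?_⟩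
    ext <;> simp
  have h := (ker (fst ℤ ℤ (ZMod K))).finrank_quotient_add_finrank
  rwa [htorsion.finrank_eq_zero, ((fst ℤ ℤ (ZMod K)).quotKerEquivOfSurjective
    Prod.fst_surjective).finrank_eq, finrank_self, add_zero, eq_comm] at h

def pushforwardMatrix (n K : ℕ) : Matrix (Fin n) (Fin n) ℤ := Matrix.of fun i j ↦
  if (i : ℕ) = j ∧ (j : ℕ) < n - 2 then -1
  else if (i : ℕ) = j + 2 ∧ (j : ℕ) < n - 2 then 1
  else if (i : ℕ) = n - 2 ∧ ((j : ℕ) = n - 2 ∨ (j : ℕ) = n - 1) then -(K : ℤ)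
  else if (i : ℕ) = n - 1 ∧ ((j : ℕ) = n - 2 ∨ (j : ℕ) = n - 1) then (K : ℤ)
  else 0

def pushforwardCokernelMap (n K : ℕ) : (Fin n → ℤ) →ₗ[ℤ] ℤ × ZMod K :=
  (∑ i, proj i).prod
    ((Int.castAddHom (ZMod K)).toIntLinearMap ∘ₗ
      ∑ i ∈ Finset.univ.filter fun i : Fin n ↦ (i : ℕ) % 2 = n % 2, proj i)

section

variable {n : ℕ} (K : ℕ)

theorem pushforwardMatrix_col_of_lt {j : Fin n} (hj : (j : ℕ) < n - 2) :
    (pushforwardMatrix n K).col j = Pi.single ⟨j + 2, by omega⟩ 1 - Pi.single j 1 := by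
  ext i
  simp only [Matrix.col_apply, pushforwardMatrix, Matrix.of_apply, Pi.sub_apply, Pi.single_apply,
    Fin.ext_iff]
  split_ifs <;> omega

theorem pushforwardMatrix_col_of_le (hn : 2 ≤ n) {j : Fin n} (hj : n - 2 ≤ (j : ℕ)) :
    (pushforwardMatrix n K).col j =
      (K : ℤ) • (Pi.single ⟨n - 1, by omega⟩ 1 - Pi.single ⟨n - 2, by omega⟩ 1) := by
  ext i
  simp only [Matrix.col_apply, pushforwardMatrix, Matrix.of_apply, Pi.smul_apply, Pi.sub_apply,
    Pi.single_apply, Fin.ext_iff, smul_eq_mul]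
  split_ifs <;> omega

theorem pushforwardCokernelMap_single (i : Fin n) (c : ℤ) :
    pushforwardCokernelMap n K (Pi.single i c) =
      (c, if (i : ℕ) % 2 = n % 2 then (c : ZMod K) else 0) := by
  simp [pushforwardCokernelMap, Finset.sum_pi_single']

theorem pushforwardCokernelMap_surjective (hn : 2 ≤ n) :
    Function.Surjective (pushforwardCokernelMap n K) := by
  rintro ⟨a, b⟩
  obtain ⟨b, rfl⟩ := ZMod.intCast_surjective b
  refine ⟨Pi.single ⟨n - 2, by omega⟩ b + Pi.single ⟨n - 1, by omega⟩ (a - b), ?_⟩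
  simp only [map_add, pushforwardCokernelMap_single,
    if_pos (show (n - 2) % 2 = n % 2 by omega), if_neg (show (n - 1) % 2 ≠ n % 2 by omega)]
  simp

theorem range_mulVecLin_le_ker_pushforwardCokernelMap (hn : 2 ≤ n) :
    range (pushforwardMatrix n K).mulVecLin ≤ ker (pushforwardCokernelMap n K) := by
  rw [Matrix.range_mulVecLin, Submodule.span_le]
  rintro _ ⟨j, rfl⟩
  rw [SetLike.mem_coe, mem_ker]
  rcases lt_or_ge (j : ℕ) (n - 2) with hj | hj
  · rw [pushforwardMatrix_col_of_lt K hj, map_sub, pushforwardCokernelMap_single,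
      pushforwardCokernelMap_single]
    simp [show (j + 2) % 2 = (j : ℕ) % 2 by omega]
  · rw [pushforwardMatrix_col_of_le K hn hj, map_smul, map_sub, pushforwardCokernelMap_single,
      pushforwardCokernelMap_single, if_pos (show (n - 2) % 2 = n % 2 by omega),
      if_neg (show (n - 1) % 2 ≠ n % 2 by omega)]
    simp

theorem single_sub_single_mem_range_pushforwardMatrix {i j : Fin n} (hij : i ≤ j)
    (hparity : (i : ℕ) % 2 = (j : ℕ) % 2) :
    Pi.single i 1 - Pi.single j 1 ∈ range (pushforwardMatrix n K).mulVecLin := by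
  obtain ⟨d, hd⟩ : ∃ d, (j : ℕ) = i + 2 * d := ⟨(j - i) / 2, by omega⟩
  induction d generalizing j with
  | zero => simp [show j = i from Fin.ext hd]
  | succ d ih =>
    rw [Fin.le_def] at hij
    obtain ⟨j', hj'⟩ : ∃ j' : Fin n, (j' : ℕ) + 2 = j := ⟨⟨j - 2, by omega⟩, by simp; omega⟩
    have hstep : Pi.single j' 1 - Pi.single j 1 =
        -(pushforwardMatrix n K).mulVecLin (Pi.single j' 1) := by
      rw [Matrix.mulVecLin_apply, Matrix.mulVec_single_one,
        pushforwardMatrix_col_of_lt K (show (j' : ℕ) < n - 2 by omega), neg_sub]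
      congr
      exact Fin.ext hj'.symm
    rw [← sub_add_sub_cancel _ (Pi.single j' 1), hstep]
    exact add_mem (ih (by rw [Fin.le_def]; omega) (by omega) (by omega))
      (neg_mem (mem_range_self _ _))

theorem ker_pushforwardCokernelMap_le_range_mulVecLin (hn : 2 ≤ n) :
    ker (pushforwardCokernelMap n K) ≤ range (pushforwardMatrix n K).mulVecLin := by
  intro y hy
  let a : Fin n := ⟨n - 2, by omega⟩
  let b : Fin n := ⟨n - 1, by omega⟩
  have hsum : ∑ i, y i = 0 ∧
      ((∑ i ∈ Finset.univ.filter fun i : Fin n ↦ (i : ℕ) % 2 = n % 2, y i : ℤ) : ZMod K) = 0 := by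
    simpa [pushforwardCokernelMap, Prod.ext_iff] using hy
  obtain ⟨t, ht⟩ := (ZMod.intCast_zmod_eq_zero_iff_dvd _ K).mp hsum.2
  have hcompl :
      ∑ i ∈ Finset.univ.filter fun i : Fin n ↦ ¬(i : ℕ) % 2 = n % 2, y i = -(K * t) := by
    rw [← ht, eq_neg_iff_add_eq_zero, add_comm, Finset.sum_filter_add_sum_filter_not, hsum.1]
  have hreduce :
      ∑ i, y i • (Pi.single i 1 - Pi.single (if (i : ℕ) % 2 = n % 2 then a else b) 1)
        ∈ range (pushforwardMatrix n K).mulVecLin := by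
    refine Submodule.sum_mem _ fun i _ ↦ Submodule.smul_mem _ _
      (single_sub_single_mem_range_pushforwardMatrix K ?_ ?_)
    all_goals split_ifs <;> simp [a, b, Fin.le_def] <;> omega
  have hreduced : ∑ i, y i • Pi.single (if (i : ℕ) % 2 = n % 2 then a else b) (1 : ℤ) =
      (-t) • (pushforwardMatrix n K).col a := by
    rw [Finset.sum_congr rfl fun i _ ↦ apply_ite (fun c ↦ y i • Pi.single c (1 : ℤ)) _ _ _,
      Finset.sum_ite, ← Finset.sum_smul, ← Finset.sum_smul, ht, hcompl,
      pushforwardMatrix_col_of_le K hn le_rfl]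
    module
  have hcol : (pushforwardMatrix n K).col a ∈ range (pushforwardMatrix n K).mulVecLin :=
    ⟨Pi.single a 1, Matrix.mulVec_single_one (pushforwardMatrix n K) a⟩
  simp only [smul_sub, Finset.sum_sub_distrib, ← pi_eq_sum_univ', hreduced] at hreduce
  exact (Submodule.sub_mem_iff_left _ (Submodule.smul_mem _ _ hcol)).mp hreduce

theorem exact_mulVecLin_pushforwardCokernelMap (hn : 2 ≤ n) :
    Function.Exact (pushforwardMatrix n K).mulVecLin (pushforwardCokernelMap n K) :=
  exact_iff.mpr <| le_antisymm (ker_pushforwardCokernelMap_le_range_mulVecLin K hn)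
    (range_mulVecLin_le_ker_pushforwardCokernelMap K hn)

end

theorem pushforward_matrix_even_general
    (n : ℕ) (hn : 2 < n)
    (B : Matrix (Fin n) (Fin n) ℤ)
    (hB : ∀ (i j : Fin n),
      B i j =
        if (i : ℕ) = (j : ℕ) ∧ (j : ℕ) < n - 2 then -1
        else if (i : ℕ) = (j : ℕ) + 2 ∧ (j : ℕ) < n - 2 then 1
        else if (i : ℕ) = n - 2 ∧ ((j : ℕ) = n - 2 ∨ (j : ℕ) = n - 1) then
          -(2 ^ ((n - 2) / 2))
        else if (i : ℕ) = n - 1 ∧ ((j : ℕ) = n - 2 ∨ (j : ℕ) = n - 1) then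
          2 ^ ((n - 2) / 2)
        else 0) :
    Nonempty ((LinearMap.ker B.mulVecLin) ≃ₗ[ℤ] ℤ) ∧
      Nonempty (((Fin n → ℤ) ⧸ LinearMap.range B.mulVecLin) ≃ₗ[ℤ]
        ℤ × ZMod (2 ^ ((n - 2) / 2))) := by
  obtain rfl : B = pushforwardMatrix n (2 ^ ((n - 2) / 2)) :=
    Matrix.ext fun i j ↦ by simp [hB, pushforwardMatrix]
  let e := (exact_mulVecLin_pushforwardCokernelMap (2 ^ ((n - 2) / 2)) hn.le)
    |>.linearEquivOfSurjective (pushforwardCokernelMap_surjective _ hn.le)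
  refine ⟨⟨LinearEquiv.ofFinrankEq _ _ ?_⟩, ⟨e⟩⟩
  rw [finrank_ker_eq_finrank_quotient_range, e.finrank_eq, finrank_int_prod_zmod, finrank_self]

/-- for even `n > 2`, the integer matrix `B : ℤⁿ → ℤⁿ` from the
push-forward computation has kernel `ℤ` and cokernel `ℤ ⊕ ℤ/2^{(n−2)/2}ℤ`. -/
theorem pushforward_matrix_even
    (n : ℕ) (hn : 2 < n) (heven : Even n)
    (B : Matrix (Fin n) (Fin n) ℤ)
    (hB : ∀ (i j : Fin n),
      B i j =
        if (i : ℕ) = (j : ℕ) ∧ (j : ℕ) < n - 2 then -1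
        else if (i : ℕ) = (j : ℕ) + 2 ∧ (j : ℕ) < n - 2 then 1
        else if (i : ℕ) = n - 2 ∧ ((j : ℕ) = n - 2 ∨ (j : ℕ) = n - 1) then
          -(2 ^ ((n - 2) / 2))
        else if (i : ℕ) = n - 1 ∧ ((j : ℕ) = n - 2 ∨ (j : ℕ) = n - 1) then
          2 ^ ((n - 2) / 2)
        else 0) :
    Nonempty ((LinearMap.ker B.mulVecLin) ≃ₗ[ℤ] ℤ) ∧
      Nonempty (((Fin n → ℤ) ⧸ LinearMap.range B.mulVecLin) ≃ₗ[ℤ]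
        ℤ × ZMod (2 ^ ((n - 2) / 2))) :=
  pushforward_matrix_even_general n hn B hB
end
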